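/- arXiv:2507.23619 — 9 statements merged into one kernel-verified Lean document; each statement's English description precedes it below -/
import Mathlib

section
/- Let b : ℕ → ℂ with b 0 ≠ 0, fix m ≥ 1, and let a : ℕ → ℂ satisfy a n = ∑_{j=0}^{n+m} b (n+m-j) * a j for all n ≥ 0. Define sequences α_k : ℕ → ℂ for k = 0,…,m-1 by α_k(n) = δ_{k,n} for n < m, α_k(m) = (δ_{k,0} - b (m-k))/b 0 (i.e. α_k(m) = (1 - b m)/b 0 if k = 0 and α_k(m) = -b (m-k)/b 0 otherwise), and α_k(n) = (α_k(n-m) - ∑_{j=0}^{n-1} b (n-j) * α_k(j))/b 0 for n > m. Then a n = ∑_{k=0}^{m-1} α_k(n) * a k for every n ≥ 0. -/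
theorem stmt_0 (b : ℕ → ℂ) (hb : b 0 ≠ 0) (m : ℕ) (hm : 1 ≤ m)
    (a : ℕ → ℂ)
    (ha : ∀ n : ℕ, a n = ∑ j ∈ Finset.range (n + m + 1), b (n + m - j) * a j)
    (α : ℕ → ℕ → ℂ)
    (hα_init : ∀ k < m, ∀ n < m, α k n = if k = n then 1 else 0)
    (hα_m : ∀ k < m, α k m = ((if k = 0 then 1 else 0) - b (m - k)) / b 0)
    (hα_rec : ∀ k < m, ∀ n > m,
      α k n = (α k (n - m) - ∑ j ∈ Finset.range n, b (n - j) * α k j) / b 0) :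
    ∀ n : ℕ, a n = ∑ k ∈ Finset.range m, α k n * a k := by
  -- the recurrence for `a` in solved form
  have key : ∀ n, m ≤ n →
      a n = (a (n - m) - ∑ j ∈ Finset.range n, b (n - j) * a j) / b 0 := by
    intro n hn
    have h := ha (n - m)
    rw [Nat.sub_add_cancel hn, Finset.sum_range_succ, Nat.sub_self] at h
    field_simp
    linear_combination -h
  -- unified recurrence for α (covers n = m and n > m)
  have hα_all : ∀ k < m, ∀ n, m ≤ n →
      α k n = (α k (n - m) - ∑ j ∈ Finset.range n, b (n - j) * α k j) / b 0 := by
    intro k hk n hn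
    rcases eq_or_lt_of_le hn with rfl | hlt
    · rw [hα_m k hk, Nat.sub_self, hα_init k hk 0 (by omega)]
      have hs : ∑ j ∈ Finset.range m, b (m - j) * α k j = b (m - k) := by
        rw [Finset.sum_eq_single k]
        · rw [hα_init k hk k hk, if_pos rfl, mul_one]
        · intro j hj hne
          rw [hα_init k hk j (Finset.mem_range.mp hj), if_neg (Ne.symm hne), mul_zero]
        · intro h; exact absurd (Finset.mem_range.mpr hk) h
      rw [hs]
    · exact hα_rec k hk n hlt
  intro n
  induction n using Nat.strong_induction_on with
  | _ n ih =>
    rcases lt_or_ge n m with h | h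
    · have hc : ∀ k ∈ Finset.range m, α k n * a k = if k = n then a n else 0 := by
        intro k hk
        rw [hα_init k (Finset.mem_range.mp hk) n h]
        split
        · next heq => rw [heq, one_mul]
        · rw [zero_mul]
      rw [Finset.sum_congr rfl hc, Finset.sum_ite_eq' (Finset.range m) n,
        if_pos (Finset.mem_range.mpr h)]
    · rw [key n h]
      have hR : ∑ k ∈ Finset.range m, α k n * a k =
          (∑ k ∈ Finset.range m, α k (n - m) * a k
            - ∑ j ∈ Finset.range n, ∑ k ∈ Finset.range m, b (n - j) * α k j * a k) / b 0 := by
        calc ∑ k ∈ Finset.range m, α k n * a k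
            = ∑ k ∈ Finset.range m,
                ((α k (n - m) - ∑ j ∈ Finset.range n, b (n - j) * α k j) * a k) / b 0 := by
              refine Finset.sum_congr rfl fun k hk => ?_
              rw [hα_all k (Finset.mem_range.mp hk) n h]; ring
          _ = (∑ k ∈ Finset.range m,
                (α k (n - m) - ∑ j ∈ Finset.range n, b (n - j) * α k j) * a k) / b 0 := by
              rw [Finset.sum_div]
          _ = (∑ k ∈ Finset.range m, α k (n - m) * a k
                - ∑ k ∈ Finset.range m, ∑ j ∈ Finset.range n, b (n - j) * α k j * a k) / b 0 := by
              rw [← Finset.sum_sub_distrib]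
              congr 1
              refine Finset.sum_congr rfl fun k _ => ?_
              rw [sub_mul, Finset.sum_mul]
          _ = _ := by rw [Finset.sum_comm]
      rw [hR]
      congr 1
      rw [ih (n - m) (by omega)]
      congr 1
      refine Finset.sum_congr rfl fun j hj => ?_
      rw [ih j (Finset.mem_range.mp hj), Finset.mul_sum]
      exact Finset.sum_congr rfl fun k _ => by ring
end

section
/- Let b : ℕ → ℂ with b 0 ≠ 0, m ≥ 1, and a a sequence satisfying a n = ∑_{j=0}^{n+m} b (n+m-j) a j for all n ≥ 0. Then, as an identity of formal power series in ℂ[[s]], (∑_{k=0}^{m-1} a k · ∑_{n=k}^{m-1} b (n-k) s^n) = A(s) · (B(s) - s^m), where A(s) = ∑_{n≥0} a n s^n and B(s) = ∑_{n≥0} b n s^n. -/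
/-! The recurrence says that the coefficients of `A * B` from degree `m` on are those of
`X ^ m * A`, so `A * (B - X ^ m)` is the truncation of `A * B` below degree `m`, which is the
left-hand side. -/

open PowerSeries

namespace PowerSeries

variable {R : Type*} [CommSemiring R]

theorem coeff_mk_mul_mk (a b : ℕ → R) (n : ℕ) :
    coeff n (mk a * mk b) = ∑ j ∈ Finset.range (n + 1), a j * b (n - j) := by
  rw [coeff_mul, Finset.Nat.sum_antidiagonal_eq_sum_range_succ_mk]
  simp only [coeff_mk]

theorem sum_C_mul_sum_Ico_C_mul_X_pow_eq_trunc (a b : ℕ → R) (m : ℕ) :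
    ∑ k ∈ Finset.range m, C (a k) * ∑ n ∈ Finset.Ico k m, C (b (n - k)) * (X : R⟦X⟧) ^ n
      = (trunc m (mk a * mk b) : R⟦X⟧) := by
  ext n
  rw [Polynomial.coeff_coe, coeff_trunc, coeff_mk_mul_mk]
  simp only [map_sum, coeff_C_mul, coeff_X_pow, mul_ite, mul_one, mul_zero, Finset.mul_sum,
    Finset.sum_ite_eq, Finset.mem_Ico]
  split_ifs with hn
  · rw [← Finset.sum_subset (Finset.range_subset_range.2 (by omega : n + 1 ≤ m))
      (fun k hk hk' ↦ if_neg (by simp at hk hk' ⊢; omega))]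
    exact Finset.sum_congr rfl fun k hk ↦ if_pos ⟨by simp at hk; omega, hn⟩
  · exact Finset.sum_eq_zero fun k _ ↦ if_neg (by omega)

end PowerSeries

theorem stmt_1_general (b : ℕ → ℂ) (m : ℕ)
    (a : ℕ → ℂ)
    (ha : ∀ n : ℕ, a n = ∑ j ∈ Finset.range (n + m + 1), b (n + m - j) * a j) :
    (∑ k ∈ Finset.range m, PowerSeries.C (a k) *
        ∑ n ∈ Finset.Ico k m, PowerSeries.C (b (n - k)) * (PowerSeries.X : ℂ⟦X⟧) ^ n)
      = PowerSeries.mk a * (PowerSeries.mk b - (PowerSeries.X : ℂ⟦X⟧) ^ m) := by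
  have hshift : (mk fun n ↦ coeff (n + m) (mk a * mk b)) = mk a := by
    ext n
    rw [coeff_mk, coeff_mk, coeff_mk_mul_mk, ha n]
    exact Finset.sum_congr rfl fun j _ ↦ mul_comm _ _
  have hsplit := eq_shift_mul_X_pow_add_trunc m (mk a * mk b)
  rw [hshift] at hsplit
  rw [sum_C_mul_sum_Ico_C_mul_X_pow_eq_trunc]
  linear_combination -hsplit

theorem stmt_1 (b : ℕ → ℂ) (hb : b 0 ≠ 0) (m : ℕ) (hm : 1 ≤ m)
    (a : ℕ → ℂ)
    (ha : ∀ n : ℕ, a n = ∑ j ∈ Finset.range (n + m + 1), b (n + m - j) * a j) :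
    (∑ k ∈ Finset.range m, PowerSeries.C (a k) *
        ∑ n ∈ Finset.Ico k m, PowerSeries.C (b (n - k)) * (PowerSeries.X : ℂ⟦X⟧) ^ n)
      = PowerSeries.mk a * (PowerSeries.mk b - (PowerSeries.X : ℂ⟦X⟧) ^ m) :=
  stmt_1_general b m a ha
end

section
/- Define b : ℕ → ℝ by b 0 = 1, b 1 = 1/2, and b n = -5/2^n for n ≥ 2. Let a : ℕ → ℝ satisfy a 0 = 1 and a n = (a (n-1) - ∑_{j=0}^{n-1} b (n-j) a j)/b 0 for n ≥ 1. Then 2 · a n = L n for all n, where L is the Lucas sequence L 0 = 2, L 1 = 1, L n = L (n-1) + L (n-2). -/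
theorem stmt_4 (b : ℕ → ℝ)
    (hb0 : b 0 = 1) (hb1 : b 1 = 1 / 2) (hbn : ∀ n : ℕ, 2 ≤ n → b n = -5 / 2 ^ n)
    (a : ℕ → ℝ) (ha0 : a 0 = 1)
    (ha : ∀ n : ℕ, 1 ≤ n →
      a n = (a (n - 1) - ∑ j ∈ Finset.range n, b (n - j) * a j) / b 0)
    (L : ℕ → ℝ) (hL0 : L 0 = 2) (hL1 : L 1 = 1)
    (hL : ∀ n : ℕ, 2 ≤ n → L n = L (n - 1) + L (n - 2)) :
    ∀ n : ℕ, 2 * a n = L n := by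
  have ha' : ∀ n : ℕ, 1 ≤ n →
      a n = a (n - 1) - ∑ j ∈ Finset.range n, b (n - j) * a j := by
    intro n hn
    rw [ha n hn, hb0, div_one]
  have hsum : ∀ m : ℕ, (∑ j ∈ Finset.range (m + 2), b (m + 2 - j) * a j)
      = (1/2) * (a (m+1) + ∑ j ∈ Finset.range (m+1), b (m+1-j) * a j)
        - (3/2) * a m := by
    intro m
    have h1 : ∀ j ∈ Finset.range m, b (m + 2 - j) * a j
        = (1/2) * (b (m+1-j) * a j) := by
      intro j hj
      have hj' : j < m := Finset.mem_range.mp hj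
      rw [hbn (m + 2 - j) (by omega), hbn (m + 1 - j) (by omega)]
      have e : m + 2 - j = (m + 1 - j) + 1 := by omega
      rw [e, pow_succ]
      ring
    rw [Finset.sum_range_succ, Finset.sum_range_succ,
      Finset.sum_range_succ (f := fun j => b (m+1-j) * a j),
      Finset.sum_congr rfl h1]
    have e1 : m + 2 - (m+1) = 1 := by omega
    have e2 : m + 2 - m = 2 := by omega
    have e3 : m + 1 - m = 1 := by omega
    rw [e1, e2, e3, hb1, hbn 2 (by norm_num), ← Finset.mul_sum]
    ring
  have key : ∀ m : ℕ, a (m + 2) = a (m + 1) + a m := by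
    intro m
    have h1 := ha' (m+2) (by omega)
    have h2 := ha' (m+1) (by omega)
    simp only [Nat.add_sub_cancel] at h1 h2
    have e : m + 2 - 1 = m + 1 := by omega
    rw [e, hsum m] at h1
    have hS : (∑ j ∈ Finset.range (m+1), b (m+1-j) * a j) = a m - a (m+1) := by
      linarith
    rw [hS] at h1
    linarith
  have ha1 : a 1 = 1/2 := by
    have := ha' 1 (by omega)
    simp [Finset.sum_range_one, hb1, ha0] at this
    linarith
  intro n
  induction n using Nat.strong_induction_on with
  | _ n ih =>
    match n with
    | 0 => rw [ha0, hL0]; norm_num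
    | 1 => rw [ha1, hL1]; norm_num
    | (m+2) =>
      have i1 := ih (m+1) (by omega)
      have i2 := ih m (by omega)
      have e1 : m + 2 - 1 = m + 1 := by omega
      have e2 : m + 2 - 2 = m := by omega
      rw [key m, hL (m+2) (by omega), e1, e2]
      linarith
end

section
/- Define ḃ : ℕ → ℂ by ḃ 0 = 1, ḃ 1 = -1, and ḃ n = 1/(n-1)! - ∑_{j=1}^{n} ḃ (n-j)/j! for n ≥ 2. Let α̇_0 satisfy α̇_0(0) = 1 and α̇_0(n) = α̇_0(n-1) - ∑_{j=0}^{n-1} ḃ (n-j) α̇_0(j) for n ≥ 1. Then α̇_0(n) = ∑_{j=0}^{n} 1/j! for all n ≥ 0. -/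
open Finset

theorem stmt_9 (b : ℕ → ℝ)
    (hb0 : b 0 = 1) (hb1 : b 1 = -1)
    (hbn : ∀ n : ℕ, 2 ≤ n →
      b n = 1 / (n - 1).factorial - ∑ j ∈ Finset.Icc 1 n, b (n - j) / j.factorial)
    (α : ℕ → ℝ) (hα0 : α 0 = 1)
    (hα : ∀ n : ℕ, 1 ≤ n →
      α n = α (n - 1) - ∑ j ∈ Finset.range n, b (n - j) * α j) :
    ∀ n : ℕ, α n = ∑ j ∈ Finset.range (n + 1), (1 : ℝ) / j.factorial := by
  set A : ℕ → ℝ := fun n => ∑ j ∈ range (n + 1), (1 : ℝ) / j.factorial with hAdef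
  -- convolution with exp
  have hc : ∀ n : ℕ, 2 ≤ n →
      ∑ j ∈ range (n + 1), b (n - j) / j.factorial = 1 / (n - 1).factorial := by
    intro n hn
    rw [Finset.sum_range_succ']
    have h2 : ∑ j ∈ Icc 1 n, b (n - j) / j.factorial
        = ∑ i ∈ range n, b (n - (i + 1)) / (i + 1).factorial := by
      rw [← Finset.Ico_add_one_right_eq_Icc, Finset.sum_Ico_eq_sum_range]
      simp [add_comm]
    rw [← h2]
    have := hbn n hn
    simp only [Nat.sub_zero, Nat.factorial_zero, Nat.cast_one, div_one, this]
    ring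
  have hc1 : ∑ j ∈ range 2, b (1 - j) / j.factorial = 0 := by
    simp [Finset.sum_range_succ, hb0, hb1]
  -- T step
  have hT : ∀ n : ℕ,
      ∑ j ∈ range (n + 2), b (n + 1 - j) * A j
        = (∑ j ∈ range (n + 1), b (n - j) * A j)
          + ∑ j ∈ range (n + 2), b (n + 1 - j) / j.factorial := by
    intro n
    have hsplit : ∀ j, b (n + 1 - j) * A j
        = b (n + 1 - j) * (∑ k ∈ range j, (1 : ℝ) / k.factorial)
          + b (n + 1 - j) / j.factorial := by
      intro j
      have : A j = (∑ k ∈ range j, (1 : ℝ) / k.factorial) + 1 / j.factorial := by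
        simp [hAdef, Finset.sum_range_succ]
      rw [this]; ring
    rw [Finset.sum_congr rfl (fun j _ => hsplit j), Finset.sum_add_distrib]
    congr 1
    rw [Finset.sum_range_succ']
    simp only [range_zero, sum_empty, mul_zero, add_zero]
    apply Finset.sum_congr rfl
    intro i _
    have h1 : n + 1 - (i + 1) = n - i := by omega
    rw [h1]
  -- T (n+1) = A n
  have hTA : ∀ n : ℕ, ∑ j ∈ range (n + 2), b (n + 1 - j) * A j = A n := by
    intro n
    induction n with
    | zero =>
      rw [hT 0, hc1]
      simp [hAdef, hb0]
    | succ n ih =>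
      rw [hT (n + 1), ih, hc (n + 2) (by omega)]
      have : A (n + 1) = A n + 1 / (n + 1).factorial := by
        simp [hAdef, Finset.sum_range_succ]
      rw [this]
      norm_num
  -- main strong induction
  intro n
  induction n using Nat.strong_induction_on with
  | _ n ih =>
    match n with
    | 0 => simpa using hα0
    | (m + 1) =>
      have hrec := hα (m + 1) (by omega)
      simp only [Nat.add_sub_cancel] at hrec
      have hsum : ∑ j ∈ range (m + 1), b (m + 1 - j) * α j
          = ∑ j ∈ range (m + 1), b (m + 1 - j) * A j := by
        apply Finset.sum_congr rfl
        intro j hj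
        rw [ih j (Finset.mem_range.mp hj)]
      have hTm := hTA m
      rw [Finset.sum_range_succ] at hTm
      simp only [Nat.sub_self, hb0, one_mul] at hTm
      have : ∑ j ∈ range (m + 1), b (m + 1 - j) * A j = A m - A (m + 1) := by
        linarith [hTm]
      rw [hrec, hsum, this, ih m (by omega)]
      have : A (m + 1) = A m + 1 / (m + 1).factorial := by
        simp [hAdef, Finset.sum_range_succ]
      simp only [hAdef] at *
      linarith
end

section
/- Define b̄ : ℕ → ℝ by b̄ 0 = 1, b̄ 1 = 1/3, b̄ n = (-1)^{n+1}/(2n-1) + ∑_{j=1}^{n} (-1)^{j+1} b̄ (n-j)/(2j+1) for n ≥ 2. Let ᾱ_0 satisfy ᾱ_0(0) = 1 and ᾱ_0(n) = ᾱ_0(n-1) - ∑_{j=0}^{n-1} b̄ (n-j) ᾱ_0(j) for n ≥ 1. Then ᾱ_0(n) = ∑_{j=1}^{n+1} (-1)^{j+1}/(2j-1) for all n ≥ 0 (the partial sums of the Leibniz series for π/4). -/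
noncomputable def aa (j : ℕ) : ℝ := (-1)^j / (2*j+1)
noncomputable def LL (n : ℕ) : ℝ := ∑ i ∈ Finset.range (n+1), aa i

lemma icc_range (f : ℕ → ℝ) (n : ℕ) :
    ∑ j ∈ Finset.Icc 1 n, f j = ∑ i ∈ Finset.range n, f (1+i) := by
  rw [← Finset.Ico_add_one_right_eq_Icc, Finset.sum_Ico_eq_sum_range]
  simp

lemma aux_L (n : ℕ) :
    (∑ j ∈ Finset.Icc 1 (n+1), (-1:ℝ)^(j+1)/(2*(j:ℝ)-1)) = LL n := by
  rw [icc_range]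
  apply Finset.sum_congr rfl
  intro i _
  unfold aa
  rw [show (1:ℕ)+i+1 = i+2 from by ring, pow_add]
  push_cast
  ring_nf

lemma LL_succ (n : ℕ) : LL (n+1) = LL n + aa (n+1) := by
  unfold LL
  rw [Finset.sum_range_succ]

lemma aa_zero : aa 0 = 1 := by unfold aa; norm_num

lemma aux_T (b : ℕ → ℝ) (hb0 : b 0 = 1)
    (hbn : ∀ n : ℕ, 2 ≤ n →
      b n = (-1 : ℝ) ^ (n + 1) / (2 * n - 1)
        + ∑ j ∈ Finset.Icc 1 n, (-1 : ℝ) ^ (j + 1) * b (n - j) / (2 * j + 1)) :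
    ∀ n : ℕ, 2 ≤ n → ∑ k ∈ Finset.range (n+1), b k * aa (n-k) = aa (n-1) := by
  intro n hn
  have h := hbn n hn
  have h1 : ((-1:ℝ))^(n+1)/(2*(n:ℝ)-1) = aa (n-1) := by
    unfold aa
    obtain ⟨m, rfl⟩ : ∃ m, n = m + 2 := ⟨n - 2, by omega⟩
    rw [show m+2-1 = m+1 from rfl, show m+2+1 = (m+1)+2 from by ring, pow_add]
    push_cast
    ring_nf
  rw [h1] at h
  have h2 : ∑ j ∈ Finset.Icc 1 n, (-1:ℝ)^(j+1) * b (n-j) / (2*(j:ℝ)+1)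
      = -∑ j ∈ Finset.Icc 1 n, b (n-j) * aa j := by
    rw [← Finset.sum_neg_distrib]
    apply Finset.sum_congr rfl
    intro j _
    unfold aa
    rw [pow_add]
    ring
  rw [h2] at h
  -- LHS: reflect the sum
  have h3 : ∑ k ∈ Finset.range (n+1), b k * aa (n-k)
      = ∑ k ∈ Finset.range (n+1), b (n-k) * aa k := by
    rw [← Finset.sum_range_reflect]
    apply Finset.sum_congr rfl
    intro j hj
    simp only [Finset.mem_range] at hj
    rw [show n+1-1-j = n-j from rfl, Nat.sub_sub_self (by omega : j ≤ n)]
  rw [h3, Finset.sum_range_succ', icc_range] at *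
  simp only [aa_zero, mul_one, Nat.sub_zero] at *
  have : ∀ i ∈ Finset.range n, b (n-(i+1)) * aa (i+1) = b (n-(1+i)) * aa (1+i) := by
    intro i _; rw [Nat.add_comm 1 i]
  rw [Finset.sum_congr rfl this]
  linarith [h]

lemma aux_S (b : ℕ → ℝ) (hb0 : b 0 = 1) (hb1 : b 1 = 1/3)
    (hbn : ∀ n : ℕ, 2 ≤ n →
      b n = (-1 : ℝ) ^ (n + 1) / (2 * n - 1)
        + ∑ j ∈ Finset.Icc 1 n, (-1 : ℝ) ^ (j + 1) * b (n - j) / (2 * j + 1)) :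
    ∀ n : ℕ, 1 ≤ n → ∑ k ∈ Finset.Icc 1 n, b k * LL (n-k) = -aa n := by
  intro n
  induction n with
  | zero => omega
  | succ m ih =>
    intro _
    rcases Nat.eq_zero_or_pos m with hm | hm
    · subst hm
      simp [LL, aa, hb1]
      norm_num
    · have hT := aux_T b hb0 hbn (m+1) (by omega)
      have ihm := ih hm
      -- split top of Icc sum
      rw [Finset.sum_Icc_succ_top (by omega : 1 ≤ m+1)]
      have hsplit : ∑ k ∈ Finset.Icc 1 m, b k * LL (m+1-k)
          = (∑ k ∈ Finset.Icc 1 m, b k * LL (m-k))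
            + ∑ k ∈ Finset.Icc 1 m, b k * aa (m+1-k) := by
        rw [← Finset.sum_add_distrib]
        apply Finset.sum_congr rfl
        intro k hk
        simp only [Finset.mem_Icc] at hk
        have : m+1-k = (m-k)+1 := by omega
        rw [this, LL_succ, ← this]
        ring
      rw [Finset.sum_range_succ', Finset.sum_range_succ] at hT
      simp only [Nat.succ_sub_succ, Nat.sub_zero, Nat.sub_self, aa_zero, mul_one,
        Nat.add_sub_cancel, hb0, one_mul] at hT
      -- hT : ∑ k in range m, b (k+1) * aa (m-k) + b (m+1) + aa (m+1) = aa m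
      have hT' : (∑ k ∈ Finset.Icc 1 m, b k * aa (m+1-k))
          = aa m - aa (m+1) - b (m+1) := by
        rw [icc_range]
        have : ∀ i ∈ Finset.range m, b (1+i) * aa (m+1-(1+i)) = b (i+1) * aa (m-i) := by
          intro i hi
          simp only [Finset.mem_range] at hi
          rw [Nat.add_comm 1 i, show m+1-(i+1) = m-i from by omega]
        rw [Finset.sum_congr rfl this]
        linarith [hT]
      rw [hsplit, ihm, hT']
      have h0 : LL 0 = 1 := by simp [LL, aa_zero]
      rw [show m+1-(m+1) = 0 from by omega, h0]
      ring

theorem stmt_11 (b : ℕ → ℝ)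
    (hb0 : b 0 = 1) (hb1 : b 1 = 1 / 3)
    (hbn : ∀ n : ℕ, 2 ≤ n →
      b n = (-1 : ℝ) ^ (n + 1) / (2 * n - 1)
        + ∑ j ∈ Finset.Icc 1 n, (-1 : ℝ) ^ (j + 1) * b (n - j) / (2 * j + 1))
    (α : ℕ → ℝ) (hα0 : α 0 = 1)
    (hα : ∀ n : ℕ, 1 ≤ n →
      α n = α (n - 1) - ∑ j ∈ Finset.range n, b (n - j) * α j) :
    ∀ n : ℕ, α n = ∑ j ∈ Finset.Icc 1 (n + 1), (-1 : ℝ) ^ (j + 1) / (2 * j - 1) := by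
  have key : ∀ n : ℕ, α n = LL n := by
    intro n
    induction n using Nat.strong_induction_on with
    | _ n ih =>
      rcases Nat.eq_zero_or_pos n with h0 | hn
      · subst h0; simp [hα0, LL, aa_zero]
      · rw [hα n hn]
        have hrw : ∀ j ∈ Finset.range n, b (n-j) * α j = b (n-j) * LL j := by
          intro j hj
          simp only [Finset.mem_range] at hj
          rw [ih j hj]
        rw [Finset.sum_congr rfl hrw, ih (n-1) (by omega)]
        have hS := aux_S b hb0 hb1 hbn n hn
        have hconv : ∑ j ∈ Finset.range n, b (n-j) * LL j
            = ∑ k ∈ Finset.Icc 1 n, b k * LL (n-k) := by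
          rw [icc_range, ← Finset.sum_range_reflect]
          apply Finset.sum_congr rfl
          intro j hj
          simp only [Finset.mem_range] at hj
          rw [show n-(n-1-j) = 1+j from by omega, show n-(1+j) = n-1-j from by omega]
        rw [hconv, hS]
        obtain ⟨m, rfl⟩ : ∃ m, n = m + 1 := ⟨n - 1, by omega⟩
        rw [LL_succ, show m+1-1 = m from rfl]
        ring
  intro n
  rw [key n, ← aux_L n]
end

section
/- Let a ∈ ℂ. Define b : ℕ → ℂ by b 0 = 1, b 1 = -1/2^a, and b n = 1/n^a - ∑_{j=0}^{n-1} b j /(n+1-j)^a for n ≥ 2 (powers via complex exponentiation). Let α_0 satisfy α_0(0) = 1 and α_0(n) = α_0(n-1) - ∑_{j=0}^{n-1} b (n-j) α_0(j) for n ≥ 1. Then α_0(n) = ∑_{j=1}^{n+1} 1/j^a for all n ≥ 0 (the partial sums of the Riemann zeta series at a). -/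
theorem stmt_12 (a : ℂ) (b : ℕ → ℂ)
    (hb0 : b 0 = 1) (hb1 : b 1 = -1 / (2 : ℂ) ^ a)
    (hbn : ∀ n : ℕ, 2 ≤ n →
      b n = 1 / (n : ℂ) ^ a - ∑ j ∈ Finset.range n, b j / ((n + 1 - j : ℕ) : ℂ) ^ a)
    (α : ℕ → ℂ) (hα0 : α 0 = 1)
    (hα : ∀ n : ℕ, 1 ≤ n →
      α n = α (n - 1) - ∑ j ∈ Finset.range n, b (n - j) * α j) :
    ∀ n : ℕ, α n = ∑ j ∈ Finset.Icc 1 (n + 1), 1 / (j : ℂ) ^ a := by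
  classical
  set H : ℕ → ℂ := fun m => ∑ j ∈ Finset.Icc 1 m, 1 / (j : ℂ) ^ a with hHdef
  set c : ℕ → ℂ := fun m => ∑ j ∈ Finset.range (m + 1), b j / ((m + 1 - j : ℕ) : ℂ) ^ a
    with hcdef
  have h1 : ((1 : ℕ) : ℂ) ^ a = 1 := by
    push_cast; exact Complex.one_cpow a
  have hHsucc : ∀ m : ℕ, H (m + 1) = H m + 1 / ((m + 1 : ℕ) : ℂ) ^ a := by
    intro m
    simp only [hHdef]
    rw [Finset.sum_Icc_succ_top (Nat.succ_le_succ (Nat.zero_le m))]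
  have hH1 : H 1 = 1 := by
    simp only [hHdef]
    rw [show Finset.Icc 1 1 = {1} from rfl]
    simp [h1]
  have hc0 : c 0 = 1 := by
    simp only [hcdef]
    simp [hb0, h1]
  have hc1 : c 1 = 0 := by
    simp only [hcdef]
    rw [Finset.sum_range_succ, Finset.sum_range_one]
    norm_num [hb0, hb1, h1]
    ring
  have hcn : ∀ m : ℕ, 2 ≤ m → c m = 1 / (m : ℂ) ^ a := by
    intro m hm
    simp only [hcdef]
    rw [Finset.sum_range_succ, show m + 1 - m = 1 by omega, h1, hbn m hm]
    ring
  -- key convolution identity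
  have hE : ∀ n : ℕ, (∑ i ∈ Finset.range (n + 1), b i * H (n + 1 - i))
      = ∑ m ∈ Finset.range (n + 1), c m := by
    intro n
    induction n with
    | zero => simp [hb0, hc0, hH1]
    | succ k ih =>
      rw [Finset.sum_range_succ (f := fun i => b i * H (k + 2 - i)),
        Finset.sum_range_succ (f := c), ← ih]
      have hsplit : (∑ i ∈ Finset.range (k + 1), b i * H (k + 2 - i))
          = (∑ i ∈ Finset.range (k + 1), b i * H (k + 1 - i))
            + ∑ i ∈ Finset.range (k + 1), b i / ((k + 2 - i : ℕ) : ℂ) ^ a := by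
        rw [← Finset.sum_add_distrib]
        apply Finset.sum_congr rfl
        intro i hi
        have hi' : i < k + 1 := Finset.mem_range.mp hi
        have h2 : k + 2 - i = (k + 1 - i) + 1 := by omega
        rw [h2, hHsucc (k + 1 - i), show (k + 1 - i) + 1 = k + 2 - i by omega]
        ring
      rw [hsplit, show k + 2 - (k + 1) = 1 by omega, hH1]
      have hck : c (k + 1) = (∑ i ∈ Finset.range (k + 1), b i / ((k + 2 - i : ℕ) : ℂ) ^ a)
          + b (k + 1) := by
        simp only [hcdef]
        rw [Finset.sum_range_succ, show k + 1 + 1 - (k + 1) = 1 by omega, h1]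
        norm_num
      rw [hck]
      ring
  have hCsum : ∀ n : ℕ, 1 ≤ n → (∑ m ∈ Finset.range (n + 1), c m) = H n := by
    intro n hn
    induction n with
    | zero => omega
    | succ k ih =>
      rcases Nat.eq_or_lt_of_le hn with h | h
      · have : k = 0 := by omega
        subst this
        rw [Finset.sum_range_succ, Finset.sum_range_one, hc0, hc1, hH1]
        ring
      · have hk : 1 ≤ k := by omega
        rw [Finset.sum_range_succ, ih hk, hcn (k + 1) (by omega), hHsucc k]
  -- main induction
  intro n
  induction n using Nat.strong_induction_on with
  | _ n ih =>
    match n with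
    | 0 => simpa [hH1] using hα0
    | Nat.succ k =>
      have hrec := hα (k + 1) (by omega)
      simp only [Nat.add_sub_cancel] at hrec
      have hsum : (∑ j ∈ Finset.range (k + 1), b (k + 1 - j) * α j)
          = ∑ j ∈ Finset.range (k + 1), b (j + 1) * H (k + 1 - j) := by
        have := Finset.sum_range_reflect (fun j => b (j + 1) * H (k + 1 - j)) (k + 1)
        rw [← this]
        apply Finset.sum_congr rfl
        intro j hj
        have hj' : j < k + 1 := Finset.mem_range.mp hj
        rw [ih j (by omega), show k + 1 - 1 - j + 1 = k + 1 - j by omega,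
          show k + 1 - (k + 1 - 1 - j) = j + 1 by omega]
      have hE' : (∑ j ∈ Finset.range (k + 1), b (j + 1) * H (k + 1 - j))
          = H (k + 1) - H (k + 2) := by
        have h2 := hE (k + 1)
        rw [Finset.sum_range_succ' (fun i => b i * H (k + 1 + 1 - i)) (k + 1)] at h2
        simp only [Nat.sub_zero, hb0, one_mul] at h2
        have h3 : (∑ i ∈ Finset.range (k + 1), b (i + 1) * H (k + 1 + 1 - (i + 1)))
            = ∑ j ∈ Finset.range (k + 1), b (j + 1) * H (k + 1 - j) := by
          apply Finset.sum_congr rfl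
          intro i _
          congr 2
          omega
        rw [h3] at h2
        have h4 := hCsum (k + 1) (by omega)
        rw [h4] at h2
        have : H (k + 1 + 1) = H (k + 2) := rfl
        rw [this] at h2
        linear_combination h2
      rw [hrec, hsum, hE', ih k (by omega)]
      show H (k + 1) - (H (k + 1) - H (k + 2)) = H (k + 1 + 1)
      ring_nf
end

section
/- Define b : ℕ → ℤ by b 0 = 1, b 1 = 0, and b n = -C(n-1) for n ≥ 2, where C is the Catalan sequence (C 0 = 1, C(n+1) = ∑_{j=0}^{n} C j · C (n-j)). Let a : ℕ → ℤ satisfy a 0 = 1 and a n = a (n-1) - ∑_{j=0}^{n-1} b (n-j) a j for n ≥ 1. Then a n = C n for all n ≥ 0. -/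
theorem stmt_17 (b : ℕ → ℤ)
    (hb0 : b 0 = 1) (hb1 : b 1 = 0)
    (hbn : ∀ n : ℕ, 2 ≤ n → b n = -(catalan (n - 1) : ℤ))
    (a : ℕ → ℤ) (ha0 : a 0 = 1)
    (ha : ∀ n : ℕ, 1 ≤ n →
      a n = a (n - 1) - ∑ j ∈ Finset.range n, b (n - j) * a j) :
    ∀ n : ℕ, a n = (catalan n : ℤ) := by
  intro n
  induction n using Nat.strong_induction_on with
  | _ n ih =>
    match n with
    | 0 => simpa using ha0
    | (m+1) =>
      have key := ha (m+1) (Nat.le_add_left 1 m)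
      simp only [Nat.add_sub_cancel] at key
      rw [Finset.sum_range_succ] at key
      have h1 : m + 1 - m = 1 := by omega
      rw [h1, hb1, zero_mul, add_zero] at key
      have hsum : ∑ j ∈ Finset.range m, b (m + 1 - j) * a j
          = ∑ j ∈ Finset.range m, -((catalan (m - j) : ℤ) * (catalan j : ℤ)) := by
        apply Finset.sum_congr rfl
        intro j hj
        have hj' := Finset.mem_range.mp hj
        rw [hbn (m + 1 - j) (by omega), ih j (by omega)]
        have : m + 1 - j - 1 = m - j := by omega
        rw [this, neg_mul]
      have hc : (catalan (m + 1) : ℤ)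
          = ∑ i ∈ Finset.range (m + 1), (catalan i : ℤ) * (catalan (m - i) : ℤ) := by
        rw [catalan_succ]
        push_cast
        exact Fin.sum_univ_eq_sum_range (fun i => (catalan i : ℤ) * (catalan (m - i) : ℤ)) (m + 1)
      rw [key, hsum, ih m (by omega), hc, Finset.sum_range_succ]
      simp only [Nat.sub_self, catalan_zero, Nat.cast_one, mul_one, Finset.sum_neg_distrib]
      ring_nf
      rw [Finset.sum_congr rfl fun j hj => mul_comm ((catalan (m - j) : ℤ)) ((catalan j : ℤ))]
end

section
/- Let b : ℕ → ℝ with b 0 > 0, b n ≥ 0 for all n, b 1 < 1 such that ∑_{n=0}^{∞} b n = 1 and b n > 0 for some n ≥ 2. Define α_0 by α_0(0) = 1 and α_0(n) = (α_0(n-1) - ∑_{j=0}^{n-1} b (n-j) α_0(j))/b 0 for n ≥ 1. Then the sequence α_0 is strictly increasing: α_0(n) < α_0(n+1) for all n ≥ 0. -/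
theorem stmt_18 (b : ℕ → ℝ)
    (hb0 : 0 < b 0) (hbnn : ∀ n : ℕ, 0 ≤ b n) (hb1 : b 1 < 1)
    (hsum : (∑' n : ℕ, b n) = 1)
    (hpos : ∃ n : ℕ, 2 ≤ n ∧ 0 < b n)
    (α : ℕ → ℝ) (hα0 : α 0 = 1)
    (hα : ∀ n : ℕ, 1 ≤ n →
      α n = (α (n - 1) - ∑ j ∈ Finset.range n, b (n - j) * α j) / b 0) :
    ∀ n : ℕ, α n < α (n + 1) := by
  obtain ⟨m, hm2, hbm⟩ := hpos
  have hsummable : Summable b := by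
    by_contra h
    rw [tsum_eq_zero_of_not_summable h] at hsum
    linarith
  have hpartial : ∀ s : Finset ℕ, ∑ k ∈ s, b k ≤ 1 := by
    intro s
    rw [← hsum]
    exact Summable.sum_le_tsum s (fun i _ => hbnn i) hsummable
  intro n
  induction n using Nat.strong_induction_on with
  | _ n IH =>
    have hmono : ∀ k, k ≤ n → ∀ j, j ≤ k → α j ≤ α k := by
      intro k hk
      induction k with
      | zero => intro j hj; interval_cases j; rfl
      | succ k ih =>
        intro j hj
        rcases eq_or_lt_of_le hj with rfl | h
        · rfl
        · exact le_trans (ih (by omega) j (by omega)) (le_of_lt (IH k (by omega)))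
    have hlt : ∀ j, j < n → α j < α n := fun j hj =>
      lt_of_lt_of_le (IH j hj) (hmono n le_rfl (j+1) (by omega))
    have hpos1 : (1:ℝ) ≤ α n := hα0 ▸ hmono n le_rfl 0 (Nat.zero_le n)
    have hαpos : 0 < α n := lt_of_lt_of_le one_pos hpos1
    have hrec := hα (n+1) (by omega)
    simp only [Nat.add_sub_cancel] at hrec
    rw [eq_div_iff (ne_of_gt hb0)] at hrec
    have hkey : α n = (∑ j ∈ Finset.range (n+1), b (n+1-j) * α j) + b 0 * α (n+1) := by
      linarith
    have hcoef : ∑ j ∈ Finset.range (n+1), b (n+1-j)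
        = (∑ k ∈ Finset.range (n+2), b k) - b 0 := by
      have h1 : ∑ j ∈ Finset.range (n+1), b (n+1-j)
          = ∑ j ∈ Finset.range (n+1), b (j+1) := by
        have := Finset.sum_range_reflect (fun j => b (j+1)) (n+1)
        rw [← this]
        apply Finset.sum_congr rfl
        intro j hj
        simp only [Finset.mem_range] at hj
        congr 1
        omega
      rw [h1, Finset.sum_range_succ' (fun k => b k) (n+1)]
      ring
    have hT : ∑ k ∈ Finset.range (n+2), b k ≤ 1 := hpartial _
    have hle : ∀ j ∈ Finset.range (n+1), b (n+1-j) * α j ≤ b (n+1-j) * α n := by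
      intro j hj
      simp only [Finset.mem_range] at hj
      exact mul_le_mul_of_nonneg_left (hmono n le_rfl j (by omega)) (hbnn _)
    have hfin : (∑ j ∈ Finset.range (n+1), b (n+1-j) * α j) < (1 - b 0) * α n := by
      rcases Nat.lt_or_ge (n+1) m with hcase | hcase
      · -- m ≥ n+2 : partial sum < 1
        have hmem : m ∉ Finset.range (n+2) := by simp; omega
        have hins := hpartial (insert m (Finset.range (n+2)))
        rw [Finset.sum_insert hmem] at hins
        calc (∑ j ∈ Finset.range (n+1), b (n+1-j) * α j)
            ≤ ∑ j ∈ Finset.range (n+1), b (n+1-j) * α n := Finset.sum_le_sum hle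
          _ = ((∑ k ∈ Finset.range (n+2), b k) - b 0) * α n := by
              rw [← hcoef, Finset.sum_mul]
          _ < (1 - b 0) * α n := by
              apply mul_lt_mul_of_pos_right _ hαpos
              linarith
      · -- m ≤ n+1 : strict inequality at term j0 = n+1-m
        have hstrict : b (n+1-(n+1-m)) * α (n+1-m) < b (n+1-(n+1-m)) * α n := by
          rw [show n+1-(n+1-m) = m from by omega]
          exact mul_lt_mul_of_pos_left (hlt (n+1-m) (by omega)) hbm
        calc (∑ j ∈ Finset.range (n+1), b (n+1-j) * α j)
            < ∑ j ∈ Finset.range (n+1), b (n+1-j) * α n :=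
              Finset.sum_lt_sum hle ⟨n+1-m, Finset.mem_range.mpr (by omega), hstrict⟩
          _ = ((∑ k ∈ Finset.range (n+2), b k) - b 0) * α n := by
              rw [← hcoef, Finset.sum_mul]
          _ ≤ (1 - b 0) * α n := by
              apply mul_le_mul_of_nonneg_right _ (le_of_lt hαpos)
              linarith
    nlinarith [hkey, hfin]
end

section
/- Let b : ℕ → ℂ be given by b 0 = 1, b 1 = 0, b 2 = -1, b 3 = -1, b 4 = -2, and in general b n = -M(n-2) for n ≥ 2 where M is the Motzkin sequence (M 0 = 1, M 1 = 1, M(n+1) = M n + ∑_{j=0}^{n-1} M j · M(n-1-j)). Let a satisfy a 0 = 1 and a n = a(n-1) - ∑_{j=0}^{n-1} b (n-j) a j for n ≥ 1. Then a n = M n for all n ≥ 0. -/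
theorem stmt_19 (M : ℕ → ℂ)
    (hM0 : M 0 = 1) (hM1 : M 1 = 1)
    (hM : ∀ n : ℕ, 1 ≤ n →
      M (n + 1) = M n + ∑ j ∈ Finset.range n, M j * M (n - 1 - j))
    (b : ℕ → ℂ)
    (hb0 : b 0 = 1) (hb1 : b 1 = 0)
    (hbn : ∀ n : ℕ, 2 ≤ n → b n = -M (n - 2))
    (a : ℕ → ℂ) (ha0 : a 0 = 1)
    (ha : ∀ n : ℕ, 1 ≤ n →
      a n = a (n - 1) - ∑ j ∈ Finset.range n, b (n - j) * a j) :
    ∀ n : ℕ, a n = M n := by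
  intro n
  induction n using Nat.strong_induction_on with
  | _ n ih =>
    match n with
    | 0 => rw [ha0, hM0]
    | 1 =>
      rw [ha 1 (by norm_num)]
      simp [hb1, ha0, hM1]
    | (m+2) =>
      have key := ha (m+2) (by omega)
      rw [Finset.sum_range_succ] at key
      have h1 : (m + 2) - (m + 1) = 1 := by omega
      rw [h1, hb1, zero_mul, add_zero] at key
      have hsum : ∑ j ∈ Finset.range (m+1), b (m + 2 - j) * a j
          = ∑ j ∈ Finset.range (m+1), -(M (m - j) * M j) := by
        apply Finset.sum_congr rfl
        intro j hj
        have hj' : j < m + 1 := Finset.mem_range.mp hj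
        rw [hbn (m + 2 - j) (by omega), ih j (by omega)]
        have : m + 2 - j - 2 = m - j := by omega
        rw [this]
        ring
      rw [hsum, Finset.sum_neg_distrib] at key
      have hm2 : (m + 2) - 1 = m + 1 := by omega
      rw [hm2, ih (m+1) (by omega)] at key
      rw [key, hM (m+1) (by omega)]
      rw [sub_neg_eq_add]
      congr 1
      apply Finset.sum_congr rfl
      intro j hj
      have : m + 1 - 1 - j = m - j := by omega
      rw [this, mul_comm]
end
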